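/- arXiv:1109.6559 — 5 statements merged into one kernel-verified Lean document; each statement's English description precedes it below -/
import Mathlib

section
/- Let k be a field of characteristic p > 0, H a p-soluble finite group, V a kH-module, and a an element of V fixed by some Sylow p-subgroup of H such that the H-orbit of a spans V. Then the fixed-point subspace C_V(H) has dimension at most 1. -/
/-- A finite group is `p`-soluble if it has a subnormal series in which every
quotient is either a `p`-group (every element of the quotient has `p`-power order)
or a `p'`-group (the quotient has order prime to `p`); equivalently, every
composition factor is a `p`-group or a `p'`-group. -/
def IsPSolvable (p : ℕ) (G : Type*) [Group G] : Prop :=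
  ∃ (n : ℕ) (c : Fin (n + 1) → Subgroup G),
    c 0 = ⊥ ∧ c (Fin.last n) = ⊤ ∧
    ∀ i : Fin n, c i.castSucc ≤ c i.succ ∧
      ((c i.castSucc).subgroupOf (c i.succ)).Normal ∧
      ((∀ x ∈ c i.succ, ∃ m : ℕ, x ^ (p ^ m) ∈ c i.castSucc) ∨
        ¬ p ∣ (c i.castSucc).relIndex (c i.succ))

/-- The subspace of `H`-fixed points `C_V(H)` of a linear action. -/
def fixedSubmodule (k H : Type*) {V : Type*} [Semiring k] [AddCommMonoid V] [Module k V]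
    [Monoid H] [DistribMulAction H V] [SMulCommClass H k V] : Submodule k V where
  carrier := {v | ∀ h : H, h • v = v}
  add_mem' := fun {x y} hx hy h => by rw [smul_add, hx h, hy h]
  zero_mem' := fun h => smul_zero h
  smul_mem' := fun c v hv => fun h => by rw [smul_comm, hv h]

/-!
Induct on `|H|`. A nontrivial `p`-soluble group has a nontrivial normal subgroup `N` that is a
`p`-group or a `p'`-group: going up the series, the conjugates of such a subgroup normalized by
one term generate such a subgroup normalized by the next. If `N` is a `p`-group, it lies in every
Sylow `p`-subgroup, so it fixes the orbit of `a` and acts trivially on `V`: pass to `H ⧸ N`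
acting on `V`. If `N` is a `p'`-group, averaging over `N` is an `H`-equivariant projection of `V`
onto `C_V(N)`; it sends `a` to a vector whose `H ⧸ N`-orbit spans `C_V(N)` and which is fixed by
the image of the Sylow subgroup, and `C_V(H) ≤ C_V(N)` is the space of `H ⧸ N`-fixed points of
`C_V(N)`.
-/

namespace Subgroup

variable {G : Type*} [Group G]

theorem relIndex_sup_right_of_le_normalizer {A B : Subgroup G} (h : A ≤ normalizer B) :
    B.relIndex (A ⊔ B) = B.relIndex A := by
  rw [← relIndex_subgroupOf (sup_le h le_normalizer), subgroupOf_sup h le_normalizer,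
    relIndex_sup_right, relIndex_subgroupOf h]

theorem card_sup_dvd_of_le_normalizer {A B : Subgroup G} (h : A ≤ normalizer B) :
    Nat.card ↥(A ⊔ B) ∣ Nat.card A * Nat.card B := by
  rw [← relIndex_bot_left, ← relIndex_mul_relIndex ⊥ B _ bot_le le_sup_right,
    relIndex_sup_right_of_le_normalizer h, relIndex_bot_left, mul_comm]
  exact mul_dvd_mul_right (relIndex_dvd_card _ _) _

theorem not_dvd_card_sup_of_le_normalizer {p : ℕ} (hp : p.Prime) {A B : Subgroup G}
    (h : A ≤ normalizer B) (hA : ¬ p ∣ Nat.card A) (hB : ¬ p ∣ Nat.card B) :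
    ¬ p ∣ Nat.card ↥(A ⊔ B) :=
  fun hAB => (hp.dvd_mul.mp (hAB.trans (card_sup_dvd_of_le_normalizer h))).elim hA hB

theorem relIndex_map_dvd {G' : Type*} [Group G'] (f : G →* G') (A B : Subgroup G) :
    (A.map f).relIndex (B.map f) ∣ A.relIndex B := by
  rw [← relIndex_comap]
  exact relIndex_dvd_of_le_left _ (le_comap_map f A)

theorem map_conj_map_conj (N : Subgroup G) (g h : G) :
    (N.map (MulAut.conj g : G →* G)).map (MulAut.conj h) =
      N.map (MulAut.conj (h * g) : G →* G) := by
  rw [map_map]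
  congr 1
  ext x
  simp [mul_assoc]

/-- The witness is the subgroup generated by the `L`-conjugates of `N`. -/
theorem exists_ge_le_le_normalizer [Finite G] {C : Subgroup G → Prop} (hbot : C ⊥)
    (hsup : ∀ A B : Subgroup G, A ≤ normalizer B → C A → C B → C (A ⊔ B))
    (hconj : ∀ (g : G) A, C A → C (A.map (MulAut.conj g : G →* G)))
    {K L N : Subgroup G} (hL : L ≤ normalizer K) (hNK : N ≤ K) (hK : K ≤ normalizer N)
    (hN : C N) : ∃ N', N ≤ N' ∧ N' ≤ K ∧ L ≤ normalizer N' ∧ C N' := by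
  classical
  have := Fintype.ofFinite L
  have hconjK : ∀ g ∈ L, N.map (MulAut.conj g : G →* G) ≤ K ∧
      K ≤ normalizer (N.map (MulAut.conj g : G →* G)) := by
    intro g hg
    rw [← mem_normalizer_iff_map_conj_eq.mp (hL hg)]
    exact ⟨map_mono hNK, (map_mono hK).trans (le_normalizer_map _)⟩
  refine ⟨⨆ g : L, N.map (MulAut.conj (g : G) : G →* G), ?_,
    iSup_le fun g => (hconjK g g.2).1, ?_, ?_⟩
  · refine le_of_eq_of_le ?_ (le_iSup (fun g : L => N.map (MulAut.conj (g : G) : G →* G)) 1)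
    ext
    simp
  · intro h hh
    rw [mem_normalizer_iff_map_conj_eq, map_iSup]
    simp_rw [map_conj_map_conj]
    exact (Equiv.mulLeft (⟨h, hh⟩ : L)).iSup_comp
      (g := fun g : L => N.map (MulAut.conj (g : G) : G →* G))
  · rw [← Finset.sup_univ_eq_iSup]
    refine (Finset.sup_induction (p := fun A => A ≤ K ∧ K ≤ normalizer A ∧ C A)
      ⟨bot_le, le_normalizer_of_normal, hbot⟩ ?_ ?_).2.2
    · rintro A ⟨hAK, hKA, hA⟩ B ⟨hBK, hKB, hB⟩
      exact ⟨sup_le hAK hBK,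
        (le_inf hKA hKB).trans (normalizer_inf_normalizer_le_normalizer_sup A B),
        hsup A B (hAK.trans hKB) hA hB⟩
    · intro g _
      exact ⟨(hconjK g g.2).1, (hconjK g g.2).2, hconj g N hN⟩

end Subgroup

namespace IsPSolvable

open Subgroup

variable {p : ℕ} {G : Type*} [Group G]

theorem of_surjective {G' : Type*} [Group G'] (f : G →* G') (hf : Function.Surjective f)
    (h : IsPSolvable p G) : IsPSolvable p G' := by
  obtain ⟨n, c, h0, hlast, hstep⟩ := h
  refine ⟨n, fun i => (c i).map f, by simp [h0], by simp [hlast, map_top_of_surjective f hf],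
    fun i => ?_⟩
  obtain ⟨hle, hnormal, hquot⟩ := hstep i
  have hle' := map_mono (f := f) hle
  refine ⟨hle', ?_, hquot.imp ?_ fun h hdvd => h (hdvd.trans (relIndex_map_dvd f _ _))⟩
  · rw [normal_subgroupOf_iff hle']
    rintro _ _ ⟨x, hx, rfl⟩ ⟨g, hg, rfl⟩
    exact ⟨g * x * g⁻¹, (normal_subgroupOf_iff hle).mp hnormal x g hx hg, by simp⟩
  · rintro h _ ⟨x, hx, rfl⟩
    obtain ⟨m, hm⟩ := h x hx
    exact ⟨m, x ^ p ^ m, hm, map_pow f x _⟩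

theorem exists_normal_isPGroup_or_not_dvd_card [Finite G] [Nontrivial G] (hp : p.Prime)
    (h : IsPSolvable p G) :
    ∃ N : Subgroup G, N.Normal ∧ N ≠ ⊥ ∧ (IsPGroup p N ∨ ¬ p ∣ Nat.card N) := by
  obtain ⟨n, c, h0, hlast, hstep⟩ := h
  suffices ∀ i, c i ≠ ⊥ → ∃ N, N ≠ ⊥ ∧ N ≤ c i ∧ c i ≤ normalizer N ∧
      (IsPGroup p N ∨ ¬ p ∣ Nat.card N) by
    obtain ⟨N, hN, -, hnorm, hNp⟩ := this (Fin.last n) (hlast ▸ top_ne_bot)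
    exact ⟨N, normalizer_eq_top_iff.mp (top_le_iff.mp (hlast ▸ hnorm)), hN, hNp⟩
  intro i
  induction i using Fin.induction with
  | zero => exact fun h => absurd h0 h
  | succ i ih =>
    intro hi
    obtain ⟨hle, hnormal, hquot⟩ := hstep i
    by_cases hbot : c i.castSucc = ⊥
    · refine ⟨c i.succ, hi, le_rfl, le_normalizer, ?_⟩
      rw [hbot, relIndex_bot_left] at hquot
      refine hquot.imp_left fun h x => ?_
      obtain ⟨m, hm⟩ := h x x.2
      exact ⟨m, Subtype.ext (mem_bot.mp hm)⟩
    obtain ⟨N, hN, hNK, hKN, hNp⟩ := ih hbot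
    have hL := le_normalizer_of_normal_subgroupOf hle
    rcases hNp with hNp | hNp
    · obtain ⟨N', hNN', hN'K, hLN', hN'p⟩ := exists_ge_le_le_normalizer (C := (IsPGroup p ·))
        .of_bot (fun _ _ h hA hB => hA.to_sup_of_normal_right' hB h) (fun _ _ hA => hA.map _)
        hL hNK hKN hNp
      exact ⟨N', ne_bot_of_le_ne_bot hN hNN', hN'K.trans hle, hLN', .inl hN'p⟩
    · obtain ⟨N', hNN', hN'K, hLN', hN'p⟩ := exists_ge_le_le_normalizer
        (C := fun A => ¬ p ∣ Nat.card A) (by simpa using hp.ne_one)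
        (fun _ _ => not_dvd_card_sup_of_le_normalizer hp)
        (fun g _ hA => by rwa [card_map_of_injective (MulAut.conj g).injective])
        hL hNK hKN hNp
      exact ⟨N', ne_bot_of_le_ne_bot hN hNN', hN'K.trans hle, hLN', .inr hN'p⟩

end IsPSolvable
namespace Representation

section

variable {k G V : Type*} [CommRing k] [Group G] [AddCommGroup V] [Module k V]
  (ρ : Representation k G V)

theorem span_range_apply_map {E : V →ₗ[k] V} (hE : ∀ g x, E (ρ g x) = ρ g (E x)) (v : V) :
    Submodule.span k (Set.range fun g => ρ g (E v)) =
      (Submodule.span k (Set.range fun g => ρ g v)).map E := by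
  rw [Submodule.map_span, ← Set.range_comp]
  simp_rw [Function.comp_def, hE]

theorem isTrivial_comp_subtype_of_span_eq_top {S : Subgroup G} [S.Normal] {v : V}
    (hSv : ∀ s ∈ S, ρ s v = v) (hv : Submodule.span k (Set.range fun g => ρ g v) = ⊤) :
    IsTrivial (ρ.comp S.subtype) where
  out s := by
    refine LinearMap.ext fun x => ?_
    have : Submodule.span k (Set.range fun g => ρ g v) ≤ LinearMap.eqLocus (ρ s) .id := by
      rw [Submodule.span_le]
      rintro _ ⟨g, rfl⟩
      have hconj : g⁻¹ * s * g ∈ S := by simpa using ‹S.Normal›.conj_mem _ s.2 g⁻¹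
      have : ρ s (ρ g v) = ρ g (ρ (g⁻¹ * s * g) v) := by
        simp only [← Module.End.mul_apply, ← map_mul]
        group
      simp only [SetLike.mem_coe, LinearMap.mem_eqLocus, this, hSv _ hconj, LinearMap.id_apply]
    exact this (hv ▸ Submodule.mem_top)

theorem invariants_ofQuotient (S : Subgroup G) [S.Normal] [IsTrivial (ρ.comp S.subtype)] :
    invariants (ofQuotient ρ S) = invariants ρ := by
  ext v
  simp only [mem_invariants]
  exact QuotientGroup.mk_surjective.forall

theorem span_range_ofQuotient (S : Subgroup G) [S.Normal] [IsTrivial (ρ.comp S.subtype)] (v : V) :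
    Submodule.span k (Set.range fun q => ofQuotient ρ S q v) =
      Submodule.span k (Set.range fun g => ρ g v) := by
  rw [← QuotientGroup.mk_surjective.range_comp]
  rfl

variable (S : Subgroup G) [S.Normal]

theorem map_subtype_invariants_quotientToInvariants :
    (invariants (quotientToInvariants ρ S)).map (invariants (ρ.comp S.subtype)).subtype =
      invariants ρ := by
  rw [invariants_ofQuotient]
  ext v
  constructor
  · rintro ⟨w, hw, rfl⟩ g
    exact congrArg Subtype.val (hw g)
  · intro hv
    exact ⟨⟨v, fun s => hv s⟩, fun g => Subtype.ext (hv g), rfl⟩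

theorem rank_invariants_le_rank_invariants_quotientToInvariants :
    Module.rank k (invariants ρ) ≤ Module.rank k (invariants (quotientToInvariants ρ S)) :=
  map_subtype_invariants_quotientToInvariants ρ S ▸ rank_map_le _ _

variable [Fintype S] [Invertible (Fintype.card S : k)]

theorem averageMap_comp_subtype_apply (g : G) (v : V) :
    averageMap (ρ.comp S.subtype) (ρ g v) = ρ g (averageMap (ρ.comp S.subtype) v) := by
  simp only [averageMap, GroupAlgebra.average, map_smul, map_sum, asAlgebraHom_of,
    MonoidHom.coe_comp, Subgroup.coe_subtype, Function.comp_apply, LinearMap.smul_apply,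
    LinearMap.coe_sum, Finset.sum_apply]
  congr 1
  refine (Fintype.sum_equiv (MulAut.conjNormal g).toEquiv _ _ fun x => ?_).symm
  simp [← Module.End.mul_apply, ← map_mul]

theorem span_range_quotientToInvariants_averageMap {v : V}
    (hv : Submodule.span k (Set.range fun g => ρ g v) = ⊤) :
    Submodule.span k (Set.range fun q => quotientToInvariants ρ S q
      ⟨averageMap (ρ.comp S.subtype) v, averageMap_invariant _ v⟩) = ⊤ := by
  set W := invariants (ρ.comp S.subtype)
  apply Submodule.map_injective_of_injective W.injective_subtype
  rw [Submodule.map_span, ← Set.range_comp, Submodule.map_top, W.range_subtype,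
    ← QuotientGroup.mk_surjective.range_comp]
  change Submodule.span k (Set.range fun g => ρ g (averageMap (ρ.comp S.subtype) v)) = W
  rw [span_range_apply_map ρ (averageMap_comp_subtype_apply ρ S), hv, Submodule.map_top,
    (isProj_averageMap _).range]

end

theorem rank_invariants_le_one_of_isPSolvable {k G V : Type*} [Field k] [Group G] [Finite G]
    [AddCommGroup V] [Module k V] {p : ℕ} [Fact p.Prime] [CharP k p] (ρ : Representation k G V)
    (hG : IsPSolvable p G) (P : Sylow p G) {v : V} (hPv : ∀ g ∈ P, ρ g v = v)
    (hv : Submodule.span k (Set.range fun g => ρ g v) = ⊤) :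
    Module.rank k (invariants ρ) ≤ 1 := by
  induction hn : Nat.card G using Nat.strong_induction_on generalizing G V with
  | _ n ih =>
  rcases subsingleton_or_nontrivial G with hG1 | hG1
  · have hrange : Set.range (fun g => ρ g v) = {v} := by
      ext w
      simp [Subsingleton.elim _ (1 : G), eq_comm]
    calc Module.rank k (invariants ρ) ≤ Module.rank k (⊤ : Submodule k V) :=
          Submodule.rank_mono le_top
      _ ≤ 1 := by
        rw [← hv, hrange]
        exact (rank_span_le _).trans_eq (Cardinal.mk_singleton v)
  obtain ⟨N, hN, hNbot, hNp⟩ := hG.exists_normal_isPGroup_or_not_dvd_card Fact.out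
  have hcard : Nat.card (G ⧸ N) < n := by
    rw [← hn, Subgroup.card_eq_card_quotient_mul_card_subgroup N]
    exact lt_mul_of_one_lt_right Nat.card_pos ((Subgroup.one_lt_card_iff_ne_bot N).mpr hNbot)
  have hGN := hG.of_surjective _ (QuotientGroup.mk'_surjective N)
  let P' := P.mapSurjective (QuotientGroup.mk'_surjective N)
  rcases hNp with hNp | hNp
  · have : IsTrivial (ρ.comp N.subtype) :=
      isTrivial_comp_subtype_of_span_eq_top ρ (fun s hs => hPv s (hNp.le_sylow_of_normal P hs)) hv
    rw [← invariants_ofQuotient ρ N]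
    refine ih _ hcard (ofQuotient ρ N) hGN P' (v := v) ?_ (span_range_ofQuotient ρ N v ▸ hv) rfl
    rintro _ ⟨g, hg, rfl⟩
    exact hPv g hg
  · have := Fintype.ofFinite N
    have : Invertible (Fintype.card N : k) := invertibleOfNonzero <| by
      rwa [Ne, CharP.cast_eq_zero_iff k p, ← Nat.card_eq_fintype_card]
    refine (rank_invariants_le_rank_invariants_quotientToInvariants ρ N).trans <|
      ih _ hcard _ hGN P' ?_ (span_range_quotientToInvariants_averageMap ρ N hv) rfl
    rintro _ ⟨g, hg, rfl⟩
    exact Subtype.ext <| show ρ g (averageMap _ v) = averageMap _ v by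
      rw [← averageMap_comp_subtype_apply, hPv g hg]

end Representation

/-- Over a field of characteristic `p > 0`, if `H` is a `p`-soluble
finite group, `a ∈ V` is fixed by some Sylow `p`-subgroup of `H`, and the `H`-orbit of
`a` spans `V`, then `dim C_V(H) ≤ 1`. -/
theorem stmt3 {k V H : Type*} [Field k] [AddCommGroup V] [Module k V]
    [Group H] [Finite H] [DistribMulAction H V] [SMulCommClass H k V]
    (p : ℕ) (hp : p.Prime) (hchar : CharP k p)
    (hps : IsPSolvable p H)
    (a : V) (P : Sylow p H) (hPa : ∀ h ∈ (P : Subgroup H), h • a = a)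
    (hspan : Submodule.span k (MulAction.orbit H a) = ⊤) :
    Module.rank k (fixedSubmodule k H (V := V)) ≤ 1 := by
  have : Fact p.Prime := ⟨hp⟩
  exact (Representation.ofDistribMulAction k H V).rank_invariants_le_one_of_isPSolvable hps P hPa
    hspan
end

section
/- Let H be a finite group with a factorization H = AB where A and B are subgroups. Let k be a field and V a non-trivial irreducible kH-module. Then it is not the case that both A fixes a non-zero vector of V and B fixes a non-zero vector of the dual module V*. -/
/-- If `H = AB` is a factorization and `V` is a non-trivial
irreducible `kH`-module, then it is not possible that `A` fixes a non-zero vector of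
`V` and `B` fixes a non-zero vector of the dual module `V*` (with the contragredient
action: `B` fixing `f : V → k` means `f (g • v) = f v` for all `g ∈ B`, `v ∈ V`). -/
theorem stmt5 {k V H : Type*} [Field k] [AddCommGroup V] [Module k V]
    [Group H] [Finite H] [DistribMulAction H V] [SMulCommClass H k V]
    (A B : Subgroup H) (hAB : ∀ h : H, ∃ a ∈ A, ∃ b ∈ B, h = a * b)
    (hnt : ∃ (h : H) (v : V), h • v ≠ v)
    (hirr : ∀ W : Submodule k V, (∀ (h : H) (w : V), w ∈ W → h • w ∈ W) → W = ⊥ ∨ W = ⊤) :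
    ¬ ((∃ a : V, a ≠ 0 ∧ ∀ g ∈ A, g • a = a) ∧
       (∃ f : V →ₗ[k] k, f ≠ 0 ∧ ∀ g ∈ B, ∀ v : V, f (g • v) = f v)) := by
  rintro ⟨⟨a, ha0, hA⟩, ⟨f, hf0, hB⟩⟩
  have key : ∀ g : H, f (g • a) = f a := by
    intro g
    obtain ⟨a₁, ha₁, b, hb, hg⟩ := hAB g⁻¹
    have hg' : g = b⁻¹ * a₁⁻¹ := by
      rw [← inv_inv g, hg, mul_inv_rev]
    rw [hg', mul_smul, hA _ (A.inv_mem ha₁)]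
    exact hB _ (B.inv_mem hb) a
  set W : Submodule k V :=
    { carrier := {v | ∀ h : H, f (h • v) = 0}
      add_mem' := by intro x y hx hy h; rw [smul_add, map_add, hx, hy, add_zero]
      zero_mem' := by intro h; rw [smul_zero, map_zero]
      smul_mem' := by intro c x hx h; rw [smul_comm, map_smul, hx, smul_zero] } with hW
  have hWmem : ∀ v : V, v ∈ W ↔ ∀ h : H, f (h • v) = 0 := fun v => Iff.rfl
  have hWinv : ∀ (h : H) (w : V), w ∈ W → h • w ∈ W := by
    intro h w hw h'
    rw [← mul_smul]
    exact hw _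
  have hWbot : W = ⊥ := by
    rcases hirr W hWinv with h | h
    · exact h
    · exfalso
      apply hf0
      ext v
      have hv : v ∈ W := h ▸ Submodule.mem_top
      simpa using hv 1
  have hfix : ∀ h : H, h • a = a := by
    intro h
    have hmem : h • a - a ∈ W := by
      intro h'
      rw [smul_sub, map_sub, ← mul_smul, key, key, sub_self]
    rw [hWbot, Submodule.mem_bot] at hmem
    exact sub_eq_zero.mp hmem
  set F : Submodule k V :=
    { carrier := {v | ∀ h : H, h • v = v}
      add_mem' := by intro x y hx hy h; rw [smul_add, hx, hy]
      zero_mem' := by intro h; rw [smul_zero]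
      smul_mem' := by intro c x hx h; rw [smul_comm, hx] } with hF
  have hFinv : ∀ (h : H) (w : V), w ∈ F → h • w ∈ F := by
    intro h w hw h'
    rw [hw h]
    exact hw h'
  obtain ⟨h, v, hv⟩ := hnt
  rcases hirr F hFinv with hbot | htop
  · have : a ∈ F := hfix
    rw [hbot, Submodule.mem_bot] at this
    exact ha0 this
  · have : v ∈ F := htop ▸ Submodule.mem_top
    exact hv (this h)
end

section
/- Let H be a finite group with an exact coprime factorization H = AB, i.e., A and B are proper subgroups with A ∩ B = 1 and gcd(|H:A|, |H:B|) = 1. If V is a non-trivial irreducible kH-module over a field k, then either A fixes no non-zero vector of V or B fixes no non-zero vector of V. -/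
/-!
Since `A ∩ B = 1` and `H = AB`, the subgroups are complements, so `|H:A| = |B|` and
`|H:B| = |A|`; coprimality makes one of them, say `|B|`, invertible in `k`. Suppose `v ≠ 0` is
fixed by `A` and `w ≠ 0` by `B`. The linear map `σ = ∑_{b ∈ B} b` is constant on the orbit
`Hv = BAv = Bv`, and `σ w = |B| w ≠ 0`. As `Hv` spans `V`, this forces `σ v ≠ 0`, so the
invariant submodule spanned by the vectors `g v - v` lies in `ker σ ≠ V` and must vanish:
`v` is fixed by all of `H`, which is impossible in a non-trivial irreducible module.
-/

open Set Pointwise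

def IsIrreducibleAction (k H V : Type*) [Semiring k] [AddCommMonoid V] [Module k V] [SMul H V] :
    Prop :=
  ∀ W : Submodule k V, (∀ (h : H) (w : V), w ∈ W → h • w ∈ W) → W = ⊥ ∨ W = ⊤

section Irreducible

variable {k V H : Type*} [Ring k] [AddCommGroup V] [Module k V]
  [Monoid H] [DistribMulAction H V] [SMulCommClass H k V]

theorem smul_mem_span_of_forall_smul_mem {s : Set V}
    (hs : ∀ (h : H), ∀ x ∈ s, h • x ∈ Submodule.span k s) (h : H) {x : V}
    (hx : x ∈ Submodule.span k s) : h • x ∈ Submodule.span k s := by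
  have hmap : (Submodule.span k s).map (DistribSMul.toLinearMap k V h) ≤
      Submodule.span k s := by
    rw [Submodule.map_span_le]
    exact hs h
  exact hmap ⟨x, hx, rfl⟩

theorem span_orbit_eq_top (hirr : IsIrreducibleAction k H V) {v : V} (hv : v ≠ 0) :
    Submodule.span k (range fun g : H => g • v) = ⊤ := by
  refine (hirr _ fun h x => smul_mem_span_of_forall_smul_mem ?_ h).resolve_left ?_
  · rintro h _ ⟨g, rfl⟩
    exact Submodule.subset_span ⟨h * g, mul_smul h g v⟩
  · intro hbot
    have hvmem : v ∈ Submodule.span k (range fun g : H => g • v) :=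
      Submodule.subset_span ⟨1, one_smul H v⟩
    exact hv (by rwa [hbot, Submodule.mem_bot] at hvmem)

theorem eq_zero_of_forall_smul_eq (hirr : IsIrreducibleAction k H V)
    (hnt : ∃ (h : H) (v : V), h • v ≠ v) {x : V} (hx : ∀ h : H, h • x = x) : x = 0 := by
  by_contra hx0
  obtain ⟨h, y, hy⟩ := hnt
  have hspan : Submodule.span k {x} = ⊤ := by
    simpa only [hx, range_const] using span_orbit_eq_top hirr hx0
  obtain ⟨c, rfl⟩ := Submodule.mem_span_singleton.mp (hspan ▸ Submodule.mem_top : y ∈ _)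
  exact hy (by rw [smul_comm, hx])

theorem smul_eq_self_of_map_smul_eq {W : Type*} [AddCommGroup W] [Module k W]
    (hirr : IsIrreducibleAction k H V) {v : V} (hv : v ≠ 0) {f : V →ₗ[k] W} (hf : f ≠ 0)
    (hconst : ∀ g : H, f (g • v) = f v) (g : H) : g • v = v := by
  have hfv : f v ≠ 0 := fun hfv =>
    hf (LinearMap.ext_on_range (span_orbit_eq_top hirr hv) fun g => by simp [hconst g, hfv])
  set U := Submodule.span k (range fun g : H => g • v - v)
  have hUinv : ∀ (h : H) (x : V), x ∈ U → h • x ∈ U := by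
    refine fun h x => smul_mem_span_of_forall_smul_mem ?_ h
    rintro h _ ⟨g, rfl⟩
    have hsplit : h • (g • v - v) = ((h * g) • v - v) - (h • v - v) := by
      rw [smul_sub, mul_smul, sub_sub_sub_cancel_right]
    rw [hsplit]
    exact Submodule.sub_mem _ (Submodule.subset_span ⟨h * g, rfl⟩)
      (Submodule.subset_span ⟨h, rfl⟩)
  have hUker : U ≤ LinearMap.ker f := by
    rw [Submodule.span_le]
    rintro _ ⟨g, rfl⟩
    simp [hconst g]
  have hUbot : U = ⊥ := (hirr U hUinv).resolve_right fun htop =>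
    hfv (hUker (htop ▸ Submodule.mem_top))
  have hmem : g • v - v ∈ U := Submodule.subset_span ⟨g, rfl⟩
  rwa [hUbot, Submodule.mem_bot, sub_eq_zero] at hmem

end Irreducible

section SubgroupSum

variable (k : Type*) {V H : Type*} [Semiring k] [AddCommMonoid V] [Module k V]
  [Group H] [DistribMulAction H V] [SMulCommClass H k V]

noncomputable def subgroupSum (B : Subgroup H) [Fintype B] : V →ₗ[k] V :=
  ∑ b : B, DistribSMul.toLinearMap k V (b : H)

variable {k} (B : Subgroup H) [Fintype B]

theorem subgroupSum_apply (x : V) : subgroupSum k B x = ∑ b : B, (b : H) • x := by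
  simp [subgroupSum]

theorem subgroupSum_smul {b : H} (hb : b ∈ B) (x : V) :
    subgroupSum k B (b • x) = subgroupSum k B x := by
  simp only [subgroupSum_apply, ← mul_smul]
  exact Fintype.sum_equiv (Equiv.mulRight ⟨b, hb⟩) _ _ fun _ => rfl

theorem subgroupSum_of_forall_smul_eq {x : V} (hx : ∀ b ∈ B, b • x = x) :
    subgroupSum k B x = Nat.card B • x := by
  simp [subgroupSum_apply, hx, Nat.card_eq_fintype_card]

end SubgroupSum

theorem forall_smul_eq_of_mul_eq_univ {k V H : Type*} [DivisionRing k] [AddCommGroup V]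
    [Module k V] [Group H] [Finite H] [DistribMulAction H V] [SMulCommClass H k V]
    (hirr : IsIrreducibleAction k H V) {A B : Subgroup H} (hBA : (B : Set H) * (A : Set H) = univ)
    (hB : (Nat.card B : k) ≠ 0) {v w : V} (hv : v ≠ 0) (hvA : ∀ a ∈ A, a • v = v)
    (hw : w ≠ 0) (hwB : ∀ b ∈ B, b • w = w) (g : H) : g • v = v := by
  have : Fintype B := Fintype.ofFinite B
  refine smul_eq_self_of_map_smul_eq hirr hv (f := subgroupSum k B) (fun hσ => ?_) (fun g => ?_) g
  · have hσw := subgroupSum_of_forall_smul_eq (k := k) B hwB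
    rw [hσ, LinearMap.zero_apply, ← Nat.cast_smul_eq_nsmul k] at hσw
    exact smul_ne_zero hB hw hσw.symm
  · obtain ⟨b, hb, a, ha, rfl⟩ := Set.mem_mul.mp (hBA ▸ mem_univ g)
    rw [mul_smul, subgroupSum_smul B hb, hvA a ha]

theorem stmt6_general {k V H : Type*} [Field k] [AddCommGroup V] [Module k V]
    [Group H] [Finite H] [DistribMulAction H V] [SMulCommClass H k V]
    (A B : Subgroup H)
    (hAB : ∀ h : H, ∃ a ∈ A, ∃ b ∈ B, h = a * b)
    (hexact : A ⊓ B = ⊥)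
    (hcop : Nat.Coprime A.index B.index)
    (hnt : ∃ (h : H) (v : V), h • v ≠ v)
    (hirr : ∀ W : Submodule k V, (∀ (h : H) (w : V), w ∈ W → h • w ∈ W) → W = ⊥ ∨ W = ⊤) :
    (∀ v : V, v ≠ 0 → ∃ g ∈ A, g • v ≠ v) ∨ (∀ v : V, v ≠ 0 → ∃ g ∈ B, g • v ≠ v) := by
  have hAB' : (A : Set H) * (B : Set H) = univ := eq_univ_of_forall fun h => by
    obtain ⟨a, ha, b, hb, rfl⟩ := hAB h
    exact mul_mem_mul ha hb
  have hBA : (B : Set H) * (A : Set H) = univ := by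
    rw [← inv_coe_set (H := A), ← inv_coe_set (H := B), ← mul_inv_rev, hAB', inv_univ]
  have hc : A.IsComplement' B :=
    Subgroup.isComplement'_of_disjoint_and_mul_eq_univ (disjoint_iff.mpr hexact) hAB'
  rw [hc.symm.index_eq_card, hc.index_eq_card] at hcop
  by_contra! hfix
  obtain ⟨⟨v, hv, hvA⟩, w, hw, hwB⟩ := hfix
  rcases ne_zero_or_ne_zero_of_nat_coprime (A := k) hcop with hBk | hAk
  · exact hv (eq_zero_of_forall_smul_eq hirr hnt
      (forall_smul_eq_of_mul_eq_univ hirr hBA hBk hv hvA hw hwB))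
  · exact hw (eq_zero_of_forall_smul_eq hirr hnt
      (forall_smul_eq_of_mul_eq_univ hirr hAB' hAk hw hwB hv hvA))

/-- If `H = AB` is an exact coprime factorization (`A`, `B` proper,
`A ∩ B = 1`, `gcd(|H:A|,|H:B|) = 1`) and `V` is a non-trivial irreducible
`kH`-module, then either `A` fixes no non-zero vector of `V` or `B` fixes no
non-zero vector of `V`. -/
theorem stmt6 {k V H : Type*} [Field k] [AddCommGroup V] [Module k V]
    [Group H] [Finite H] [DistribMulAction H V] [SMulCommClass H k V]
    (A B : Subgroup H) (hA : A ≠ ⊤) (hB : B ≠ ⊤)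
    (hAB : ∀ h : H, ∃ a ∈ A, ∃ b ∈ B, h = a * b)
    (hexact : A ⊓ B = ⊥)
    (hcop : Nat.Coprime A.index B.index)
    (hnt : ∃ (h : H) (v : V), h • v ≠ v)
    (hirr : ∀ W : Submodule k V, (∀ (h : H) (w : V), w ∈ W → h • w ∈ W) → W = ⊥ ∨ W = ⊤) :
    (∀ v : V, v ≠ 0 → ∃ g ∈ A, g • v ≠ v) ∨ (∀ v : V, v ≠ 0 → ∃ g ∈ B, g • v ≠ v) :=
  stmt6_general A B hAB hexact hcop hnt hirr
end

section
/- Every element of GL_n(q) is conjugate to its inverse in the group GL_n(q)⟨τ⟩, where τ is the transpose-inverse automorphism x ↦ (x^T)^{-1}. -/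
/-!
Over any field a square matrix `A` is similar to its transpose. By the structure theorem for
torsion modules over the PID `F[X]`, `Fⁿ` with `X` acting as `A` is a direct sum of cyclic
modules `F[X] ⧸ (f)`. On each summand, `(u, v) ↦` (coefficient of `X ^ (deg f - 1)` in the reduced
representative of `u v`) is a nondegenerate pairing for which multiplication by `X` is
self-adjoint; the Gram matrix `S` of their sum is invertible and satisfies `Aᵀ S = S A`.
Taking `A = x⁻¹` and `g = S⁻¹`, conjugating `x` by `gτ` gives `g (x⁻¹)ᵀ g⁻¹ = x⁻¹`.
-/

open Matrix

/-- The transpose-inverse automorphism `τ : x ↦ (xᵀ)⁻¹` on the units of the matrix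
ring, i.e. on `GL_n`. -/
def transposeInv {n : ℕ} {F : Type*} [Field F]
    (x : (Matrix (Fin n) (Fin n) F)ˣ) : (Matrix (Fin n) (Fin n) F)ˣ where
  val := Matrix.transpose ((x⁻¹ : (Matrix (Fin n) (Fin n) F)ˣ) : Matrix (Fin n) (Fin n) F)
  inv := Matrix.transpose ((x : Matrix (Fin n) (Fin n) F))
  val_inv := by
    rw [← Matrix.transpose_mul, Units.mul_inv, Matrix.transpose_one]
  inv_val := by
    rw [← Matrix.transpose_mul, Units.inv_mul, Matrix.transpose_one]

open Polynomial DirectSum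

namespace AdjoinRoot

variable {F : Type*} [Field F] {g : F[X]}

noncomputable def topCoeff (hg : g.Monic) : AdjoinRoot g →ₗ[F] F :=
  (lcoeff F (g.natDegree - 1)).comp (modByMonicHom hg)

theorem exists_topCoeff_mul_ne_zero (hg : g.Monic) {u : AdjoinRoot g} (hu : u ≠ 0) :
    ∃ c, topCoeff hg (u * c) ≠ 0 := by
  set r := modByMonicHom hg u
  have hu_eq : mk g r = u := mk_leftInverse hg u
  have hr : r ≠ 0 := by
    rintro h
    exact hu (by rw [← hu_eq, h, map_zero])
  have hr_lt : r.natDegree < g.natDegree := by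
    refine natDegree_lt_natDegree hr ?_
    obtain ⟨f, rfl⟩ := mk_surjective u
    rw [show r = f %ₘ g from modByMonicHom_mk hg f]
    exact degree_modByMonic_lt f hg
  -- multiplying by `X ^ k` moves the leading coefficient of `r` to degree `deg g - 1`
  -- without leaving the reduced range
  set k := g.natDegree - 1 - r.natDegree
  have hdeg : (r * X ^ k).natDegree = g.natDegree - 1 := by
    rw [natDegree_mul_X_pow k hr]
    omega
  have hlt : (r * X ^ k).degree < g.degree := by
    rw [degree_eq_natDegree (mul_ne_zero hr (pow_ne_zero _ X_ne_zero)), hdeg,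
      degree_eq_natDegree hg.ne_zero]
    exact_mod_cast (by omega : g.natDegree - 1 < g.natDegree)
  refine ⟨mk g (X ^ k), ?_⟩
  rw [topCoeff, LinearMap.comp_apply, ← hu_eq, ← map_mul, modByMonicHom_mk,
    (modByMonic_eq_self_iff hg).2 hlt, lcoeff_apply, ← hdeg, coeff_natDegree,
    leadingCoeff_mul_X_pow]
  exact leadingCoeff_ne_zero.2 hr

end AdjoinRoot

theorem Polynomial.exists_functional_quotient_span_singleton {F : Type*} [Field F] {f : F[X]}
    (hf : f ≠ 0) : ∃ ℓ : (F[X] ⧸ (F[X] ∙ f)) →ₗ[F] F, ∀ u ≠ 0, ∃ c, ℓ (u * c) ≠ 0 := by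
  classical
  have hg : (normalize f).Monic := monic_normalize hf
  let e : (F[X] ⧸ (F[X] ∙ f)) ≃ₐ[F] AdjoinRoot (normalize f) :=
    Ideal.quotientEquivAlgOfEq F (Ideal.span_singleton_eq_span_singleton.2 (associated_normalize f))
  refine ⟨(AdjoinRoot.topCoeff hg).comp e.toLinearMap, fun u hu => ?_⟩
  obtain ⟨c, hc⟩ := AdjoinRoot.exists_topCoeff_mul_ne_zero hg (e.toRingEquiv.map_ne_zero_iff.2 hu)
  exact ⟨e.symm c, by simpa using hc⟩

namespace DirectSum

variable {F A ι : Type*} [Field F] [CommRing A] [Fintype ι] {R : ι → Type*}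
  [∀ i, CommRing (R i)] [∀ i, Algebra F (R i)] [∀ i, Algebra A (R i)]

noncomputable def frobeniusForm (ℓ : ∀ i, R i →ₗ[F] F) : LinearMap.BilinForm F (⨁ i, R i) :=
  ∑ i, ((LinearMap.mul F (R i)).compr₂ (ℓ i)).compl₁₂ (component F ι R i) (component F ι R i)

theorem frobeniusForm_apply (ℓ : ∀ i, R i →ₗ[F] F) (v w : ⨁ i, R i) :
    frobeniusForm ℓ v w = ∑ i, ℓ i (v i * w i) := by
  simp only [frobeniusForm, LinearMap.coe_sum, Finset.sum_apply, LinearMap.compl₁₂_apply,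
    LinearMap.compr₂_apply, LinearMap.mul_apply_apply]
  rfl

theorem frobeniusForm_smul_left (ℓ : ∀ i, R i →ₗ[F] F) (a : A) (v w : ⨁ i, R i) :
    frobeniusForm ℓ (a • v) w = frobeniusForm ℓ v (a • w) := by
  simp only [frobeniusForm_apply, smul_apply, Algebra.smul_mul_assoc, Algebra.mul_smul_comm]

theorem frobeniusForm_separatingLeft [DecidableEq ι] (ℓ : ∀ i, R i →ₗ[F] F)
    (hℓ : ∀ i, ∀ u : R i, u ≠ 0 → ∃ c, ℓ i (u * c) ≠ 0) : (frobeniusForm ℓ).SeparatingLeft := by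
  intro v hv
  by_contra hne
  obtain ⟨i, hi⟩ : ∃ i, v i ≠ 0 := by
    by_contra! h
    exact hne (DirectSum.ext h)
  obtain ⟨c, hc⟩ := hℓ i _ hi
  apply hc
  rw [← hv (of R i c), frobeniusForm_apply, Finset.sum_eq_single i, of_eq_same]
  · intro j _ hj
    rw [of_eq_of_ne _ _ _ hj, mul_zero, map_zero]
  · simp

end DirectSum

theorem LinearMap.exists_bilinForm_separatingLeft_isAdjointPair {F V : Type*} [Field F]
    [AddCommGroup V] [Module F V] [FiniteDimensional F V] (φ : Module.End F V) :
    ∃ B : LinearMap.BilinForm F V, B.SeparatingLeft ∧ B.IsAdjointPair B φ φ := by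
  classical
  obtain ⟨ι, _, p, hp, e, ⟨ε⟩⟩ :=
    Module.equiv_directSum_of_isTorsion (Module.AEval.isTorsion_of_finiteDimensional F V φ)
  choose ℓ hℓ using fun i =>
    exists_functional_quotient_span_singleton (pow_ne_zero (e i) (hp i).ne_zero)
  let E : V ≃ₗ[F] ⨁ i, F[X] ⧸ (F[X] ∙ p i ^ e i) :=
    (Module.AEval'.of φ).trans (ε.restrictScalars F)
  have hE : ∀ v, E (φ v) = (X : F[X]) • E v := fun v => by
    simp [E, ← Module.AEval'.X_smul_of]
  refine ⟨(DirectSum.frobeniusForm ℓ).compl₁₂ E.toLinearMap E.toLinearMap,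
    fun v hv => ?_, fun v w => ?_⟩
  · exact E.map_eq_zero_iff.1 (DirectSum.frobeniusForm_separatingLeft ℓ hℓ (E v) fun y => by
      simpa using hv (E.symm y))
  · simp only [compl₁₂_apply, LinearEquiv.coe_coe, hE, DirectSum.frobeniusForm_smul_left]

theorem Matrix.isConj_transpose {F ι : Type*} [Field F] [Fintype ι] [DecidableEq ι]
    (A : Matrix ι ι F) : IsConj Aᵀ A := by
  obtain ⟨B, hB, hAB⟩ := LinearMap.exists_bilinForm_separatingLeft_isAdjointPair (Matrix.toLin' A)
  set S := LinearMap.toMatrix₂' F B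
  have hS : S.det ≠ 0 :=
    separatingLeft_iff_det_ne_zero.1 (LinearMap.separatingLeft_toMatrix₂'_iff.2 hB)
  have hSA : Aᵀ * S = S * A :=
    (isAdjointPair_toLinearMap₂' S S A A).1 (by rwa [Matrix.toLinearMap₂'_toMatrix'])
  exact isConj_comm.1 ⟨(S.isUnit_iff_isUnit_det.2 hS.isUnit).unit, hSA.symm⟩

theorem stmt9_general {n : ℕ} (F : Type*) [Field F]
    (x : (Matrix (Fin n) (Fin n) F)ˣ) :
    ∃ g : (Matrix (Fin n) (Fin n) F)ˣ,
      g * x * g⁻¹ = x⁻¹ ∨ g * transposeInv x * g⁻¹ = x⁻¹ := by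
  obtain ⟨g, hg⟩ := Matrix.isConj_transpose (x⁻¹ : (Matrix (Fin n) (Fin n) F)ˣ).val
  refine ⟨g, Or.inr (Units.ext ?_)⟩
  rw [Units.val_mul, Units.val_mul, show (transposeInv x).val = (x⁻¹).valᵀ from rfl, hg,
    mul_assoc, Units.mul_inv, mul_one]

/-- Every element `x` of `GL_n(q)` (`n ≥ 2`, `q` a finite field) is
conjugate to its inverse in `GL_n(q)⟨τ⟩`, where `τ` is the transpose-inverse
automorphism: there is `g ∈ GL_n(q)` with `g x g⁻¹ = x⁻¹` or `g τ(x) g⁻¹ = x⁻¹`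
(the latter being conjugation of `x` by the element `gτ` of the extension). -/
theorem stmt9 {n : ℕ} (hn : 2 ≤ n) (F : Type*) [Field F] [Fintype F]
    (x : (Matrix (Fin n) (Fin n) F)ˣ) :
    ∃ g : (Matrix (Fin n) (Fin n) F)ˣ,
      g * x * g⁻¹ = x⁻¹ ∨ g * transposeInv x * g⁻¹ = x⁻¹ :=
  stmt9_general F x
end

section
/- Let G be a transitive permutation group on a finite set Ω, let ω ∈ Ω, and suppose N is a normal subgroup of the point stabilizer G_ω such that ω is the unique fixed point of N on Ω. Then the maximum number of pairwise coprime non-trivial subdegrees of G is at most μ(N), where μ(N) is the maximal size of a family of proper subgroups of N with pairwise coprime indices. -/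
/-!
Write `H = G_ω`. For each point `α`, the `N`-orbit of `α` is a block of imprimitivity for `H`
(as `N ◁ H`), so `[N : N_α] = |α^N|` divides the subdegree `|α^H|`. Hence the stabilizers `N_α`
of representatives of pairwise coprime subdegrees have pairwise coprime indices in `N`, and they
are proper: `N_α = N` would make `α` a fixed point of `N`, i.e. `α = ω`, whose subdegree is `1`.
-/

open MulAction Subgroup

/-- The `N`-orbit of the coset `K` is a block for `G` acting on `G ⧸ K`. -/
theorem Subgroup.relIndex_dvd_index_of_normal_right {G : Type*} [Group G] (K N : Subgroup G)
    [N.Normal] : K.relIndex N ∣ K.index := by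
  have hstab : stabilizer N ((1 : G) : G ⧸ K) = K.subgroupOf N := by
    ext n
    change (n : G) • ((1 : G) : G ⧸ K) = (1 : G) ↔ (n : G) ∈ K
    rw [MulAction.Quotient.smul_mk, QuotientGroup.eq]
    simp
  rw [relIndex, ← hstab, index_stabilizer]
  exact (IsBlock.orbit_of_normal _).ncard_dvd_card ⟨_, mem_orbit_self _⟩

namespace MulAction

variable {H X : Type*} [Group H] [MulAction H X]

theorem index_stabilizer_dvd_card_orbit_of_normal (N : Subgroup H) [N.Normal] (x : X) :
    (stabilizer N x).index ∣ Nat.card (orbit H x) := by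
  have := (stabilizer H x).relIndex_dvd_index_of_normal_right N
  rwa [index_stabilizer, ← Nat.card_coe_set_eq] at this

theorem stabilizer_ne_top_of_one_lt_card_orbit {N : Subgroup H}
    (hfix : fixedPoints N X ⊆ fixedPoints H X) {x : X} (hx : 1 < Nat.card (orbit H x)) :
    stabilizer N x ≠ ⊤ := by
  intro htop
  have hxN : x ∈ fixedPoints N X := fun n => mem_stabilizer_iff.mp (htop ▸ mem_top n)
  have := (subsingleton_orbit_iff_mem_fixedPoints.mpr (hfix hxN)).coe_sort
  exact hx.not_ge (Finite.card_le_one_iff_subsingleton.mpr this)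

end MulAction

theorem stmt13_general {G Ω : Type*} [Group G] [MulAction G Ω] (ω : Ω)
    (N : Subgroup (MulAction.stabilizer G ω)) (hN : N.Normal)
    (hfix : ∀ α : Ω, (∀ g : N, ((g : MulAction.stabilizer G ω) : G) • α = α) → α = ω)
    (μ : ℕ)
    (hμ : ∀ (s : ℕ) (B : Fin s → Subgroup N),
      (∀ i, B i ≠ ⊤) → (∀ i j, i ≠ j → Nat.Coprime (B i).index (B j).index) → s ≤ μ)
    (t : ℕ) (α : Fin t → Ω)
    (hsize : ∀ i, 1 < Nat.card (MulAction.orbit (MulAction.stabilizer G ω) (α i)))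
    (hcop : ∀ i j, i ≠ j →
      Nat.Coprime (Nat.card (MulAction.orbit (MulAction.stabilizer G ω) (α i)))
        (Nat.card (MulAction.orbit (MulAction.stabilizer G ω) (α j)))) :
    t ≤ μ := by
  have hfixedPoints : fixedPoints N Ω ⊆ fixedPoints (stabilizer G ω) Ω := by
    intro x hx
    rw [hfix x hx]
    exact fun g => g.2
  have hdvd i := index_stabilizer_dvd_card_orbit_of_normal N (α i)
  refine hμ t (fun i => stabilizer N (α i))
    (fun i => stabilizer_ne_top_of_one_lt_card_orbit hfixedPoints (hsize i)) ?_
  exact fun i j hij => (hcop i j hij).of_dvd (hdvd i) (hdvd j)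

/-- Let `G` be transitive on a finite set `Ω`, `ω ∈ Ω`, and let
`N` be a normal subgroup of the stabilizer `G_ω` whose unique fixed point on `Ω` is
`ω`.  If every family of proper subgroups of `N` with pairwise coprime indices has
size at most `μ` (i.e. `μ(N) ≤ μ`), then any family of points whose
`G_ω`-orbits have pairwise coprime sizes, all bigger than `1`, has size at most `μ`:
the number of pairwise coprime non-trivial subdegrees of `G` is at most `μ(N)`. -/
theorem stmt13 {G Ω : Type*} [Group G] [MulAction G Ω] [Finite Ω]
    [MulAction.IsPretransitive G Ω] (ω : Ω)
    (N : Subgroup (MulAction.stabilizer G ω)) (hN : N.Normal)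
    (hfix : ∀ α : Ω, (∀ g : N, ((g : MulAction.stabilizer G ω) : G) • α = α) → α = ω)
    (μ : ℕ)
    (hμ : ∀ (s : ℕ) (B : Fin s → Subgroup N),
      (∀ i, B i ≠ ⊤) → (∀ i j, i ≠ j → Nat.Coprime (B i).index (B j).index) → s ≤ μ)
    (t : ℕ) (α : Fin t → Ω)
    (hsize : ∀ i, 1 < Nat.card (MulAction.orbit (MulAction.stabilizer G ω) (α i)))
    (hcop : ∀ i j, i ≠ j →
      Nat.Coprime (Nat.card (MulAction.orbit (MulAction.stabilizer G ω) (α i)))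
        (Nat.card (MulAction.orbit (MulAction.stabilizer G ω) (α j)))) :
    t ≤ μ :=
  stmt13_general ω N hN hfix μ hμ t α hsize hcop
end
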